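/- Let M and M̄ be two finite POMDP models over the same state, action, and observation spaces with identical reward functions and observation functions, such that for all states s, s' and actions a, |T_M(s'|s,a) - T_M̄(s'|s,a)| ≤ ε/(H²·N·R_max), where H is the horizon, N the number of states, R_max an upper bound on |R(s,a)|, and 0 < ε < 1. Then for any H-step policy f (mapping observation-action histories to actions), the H-step expected cumulative rewards satisfy |V^f_M - V^f_M̄| ≤ ε. -/
import Mathlib


structure POMDP (S A O : Type) where
  T : S → A → S → ℝ
  E : S → O → ℝ
  R : S → A → ℝ

noncomputable def stepProb {S A O : Type} (M : POMDP S A O) (f : List O → A) :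
    S → List O → List (S × O) → ℝ
  | _, _, [] => 1
  | s, hist, (s', o') :: rest =>
      M.T s (f hist) s' * M.E s' o' * stepProb M f s' (hist ++ [o']) rest

noncomputable def trajProb {S A O : Type} (M : POMDP S A O) (b0 : S → ℝ) (f : List O → A) :
    List (S × O) → ℝ
  | [] => 1
  | (s, o) :: rest => b0 s * M.E s o * stepProb M f s [o] rest

noncomputable def cumR {S A O : Type} (M : POMDP S A O) (f : List O → A) :
    List O → List (S × O) → ℝ
  | _, [] => 0
  | hist, (s, o) :: rest => M.R s (f (hist ++ [o])) + cumR M f (hist ++ [o]) rest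

/-- The `H`-step expected cumulative reward of policy `f` on POMDP `M`
with initial belief `b0`. -/
noncomputable def value {S A O : Type} [Fintype S] [Fintype O]
    (M : POMDP S A O) (b0 : S → ℝ) (f : List O → A) (H : ℕ) : ℝ :=
  ∑ ρ : Fin H → S × O, trajProb M b0 f (List.ofFn ρ) * cumR M f [] (List.ofFn ρ)

lemma sum_ofFn_succ' {X : Type} [Fintype X] (k : ℕ) (g : List X → ℝ) :
    ∑ ρ : Fin (k+1) → X, g (List.ofFn ρ)
      = ∑ x : X, ∑ ρ : Fin k → X, g (x :: List.ofFn ρ) := by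
  rw [← (Fin.consEquiv (fun _ : Fin (k+1) => X)).sum_comp (fun ρ => g (List.ofFn ρ))]
  rw [Fintype.sum_prod_type]
  simp [Fin.consEquiv, List.ofFn_succ]

lemma stepProb_nonneg {S A O : Type} (M : POMDP S A O) (f : List O → A)
    (hTpos : ∀ s a s', 0 ≤ M.T s a s') (hEpos : ∀ s o, 0 ≤ M.E s o) :
    ∀ (l : List (S × O)) (s : S) (hist : List O), 0 ≤ stepProb M f s hist l := by
  intro l
  induction l with
  | nil => intro s hist; simp [stepProb]
  | cons x rest ih =>
    intro s hist
    obtain ⟨s', o'⟩ := x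
    simp only [stepProb]
    exact mul_nonneg (mul_nonneg (hTpos _ _ _) (hEpos _ _)) (ih _ _)

lemma stepProb_sum {S A O : Type} [Fintype S] [Fintype O] (M : POMDP S A O) (f : List O → A)
    (hTsum : ∀ s a, ∑ s', M.T s a s' = 1) (hEsum : ∀ s, ∑ o, M.E s o = 1) :
    ∀ (k : ℕ) (s : S) (hist : List O),
      ∑ ρ : Fin k → S × O, stepProb M f s hist (List.ofFn ρ) = 1 := by
  intro k
  induction k with
  | zero => intro s hist; simp [stepProb]
  | succ k ih =>
    intro s hist
    rw [sum_ofFn_succ']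
    have : ∀ x : S × O, ∑ ρ : Fin k → S × O, stepProb M f s hist (x :: List.ofFn ρ)
        = M.T s (f hist) x.1 * M.E x.1 x.2 := by
      rintro ⟨s', o'⟩
      simp only [stepProb, ← Finset.mul_sum, ih]
      ring
    rw [Finset.sum_congr rfl (fun x _ => this x)]
    rw [Fintype.sum_prod_type]
    simp only [← Finset.mul_sum, hEsum, mul_one, hTsum]

lemma stepProb_diff {S A O : Type} [Fintype S] [Fintype O] (M Mb : POMDP S A O) (f : List O → A) (α : ℝ)
    (hTpos : ∀ s a s', 0 ≤ M.T s a s') (hTsum : ∀ s a, ∑ s', M.T s a s' = 1)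
    (hTbpos : ∀ s a s', 0 ≤ Mb.T s a s') (hTbsum : ∀ s a, ∑ s', Mb.T s a s' = 1)
    (hEpos : ∀ s o, 0 ≤ M.E s o) (hEsum : ∀ s, ∑ o, M.E s o = 1)
    (hEe : Mb.E = M.E)
    (hT : ∀ s a s', |M.T s a s' - Mb.T s a s'| ≤ α) :
    ∀ (k : ℕ) (s : S) (hist : List O),
      ∑ ρ : Fin k → S × O,
        |stepProb M f s hist (List.ofFn ρ) - stepProb Mb f s hist (List.ofFn ρ)|
      ≤ k * (Fintype.card S : ℝ) * α := by
  intro k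
  induction k with
  | zero => intro s hist; simp [stepProb]
  | succ k ih =>
    intro s hist
    rw [sum_ofFn_succ' k (fun l => |stepProb M f s hist l - stepProb Mb f s hist l|)]
    have key : ∀ x : S × O,
        ∑ ρ : Fin k → S × O,
          |stepProb M f s hist (x :: List.ofFn ρ) - stepProb Mb f s hist (x :: List.ofFn ρ)|
        ≤ |M.T s (f hist) x.1 - Mb.T s (f hist) x.1| * M.E x.1 x.2
          + M.T s (f hist) x.1 * M.E x.1 x.2 * (k * (Fintype.card S : ℝ) * α) := by
      rintro ⟨s', o'⟩
      simp only [stepProb, hEe]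
      set a := M.T s (f hist) s'
      set b := Mb.T s (f hist) s'
      set c := M.E s' o'
      have hc : 0 ≤ c := hEpos _ _
      have ha : 0 ≤ a := hTpos _ _ _
      calc ∑ ρ : Fin k → S × O,
            |a * c * stepProb M f s' (hist ++ [o']) (List.ofFn ρ)
              - b * c * stepProb Mb f s' (hist ++ [o']) (List.ofFn ρ)|
          ≤ ∑ ρ : Fin k → S × O,
            (|a - b| * c * stepProb Mb f s' (hist ++ [o']) (List.ofFn ρ)
              + a * c * |stepProb M f s' (hist ++ [o']) (List.ofFn ρ)
                - stepProb Mb f s' (hist ++ [o']) (List.ofFn ρ)|) := by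
            apply Finset.sum_le_sum
            intro ρ _
            set x := stepProb M f s' (hist ++ [o']) (List.ofFn ρ)
            set y := stepProb Mb f s' (hist ++ [o']) (List.ofFn ρ)
            have hy : 0 ≤ y := stepProb_nonneg Mb f hTbpos (by rw [hEe]; exact hEpos) _ _ _
            have e : a * c * x - b * c * y = (a - b) * (c * y) + (a * c) * (x - y) := by ring
            calc |a * c * x - b * c * y| ≤ |(a - b) * (c * y)| + |(a * c) * (x - y)| := by
                  rw [e]; exact abs_add_le _ _
              _ = |a - b| * c * y + a * c * |x - y| := by
                  rw [abs_mul (a-b) (c*y), abs_mul (a*c) (x-y),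
                    abs_of_nonneg (mul_nonneg hc hy),
                    abs_of_nonneg (mul_nonneg ha hc)]; ring
        _ = |a - b| * c + a * c * ∑ ρ : Fin k → S × O,
              |stepProb M f s' (hist ++ [o']) (List.ofFn ρ)
                - stepProb Mb f s' (hist ++ [o']) (List.ofFn ρ)| := by
            rw [Finset.sum_add_distrib, ← Finset.mul_sum, ← Finset.mul_sum,
              stepProb_sum Mb f hTbsum (by rw [hEe]; exact hEsum), mul_one]
        _ ≤ |a - b| * c + a * c * (k * (Fintype.card S : ℝ) * α) := by
            have := ih s' (hist ++ [o'])
            have hac : 0 ≤ a * c := mul_nonneg ha hc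
            nlinarith [this]
    calc ∑ x : S × O, ∑ ρ : Fin k → S × O,
          |stepProb M f s hist (x :: List.ofFn ρ) - stepProb Mb f s hist (x :: List.ofFn ρ)|
        ≤ ∑ x : S × O, (|M.T s (f hist) x.1 - Mb.T s (f hist) x.1| * M.E x.1 x.2
            + M.T s (f hist) x.1 * M.E x.1 x.2 * (k * (Fintype.card S : ℝ) * α)) :=
          Finset.sum_le_sum fun x _ => key x
      _ = (∑ s' : S, |M.T s (f hist) s' - Mb.T s (f hist) s'|)
            + k * (Fintype.card S : ℝ) * α := by
          rw [Finset.sum_add_distrib, Fintype.sum_prod_type, Fintype.sum_prod_type]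
          simp only [← Finset.mul_sum, hEsum, mul_one, ← Finset.sum_mul, hTsum, one_mul]
      _ ≤ (Fintype.card S : ℝ) * α + k * (Fintype.card S : ℝ) * α := by
          have : (∑ s' : S, |M.T s (f hist) s' - Mb.T s (f hist) s'|)
              ≤ ∑ _s' : S, α := Finset.sum_le_sum fun s' _ => hT _ _ _
          simpa [Finset.sum_const, nsmul_eq_mul] using this
      _ = (k + 1 : ℕ) * (Fintype.card S : ℝ) * α := by push_cast; ring

lemma cumR_congr {S A O : Type} (M Mb : POMDP S A O) (f : List O → A) (hRe : Mb.R = M.R) :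
    ∀ (l : List (S × O)) (hist : List O), cumR Mb f hist l = cumR M f hist l := by
  intro l
  induction l with
  | nil => intro hist; simp [cumR]
  | cons x rest ih =>
    intro hist
    obtain ⟨s, o⟩ := x
    simp only [cumR, hRe, ih]

lemma cumR_bound {S A O : Type} (M : POMDP S A O) (f : List O → A) (Rmax : ℝ)
    (hRbound : ∀ s a, |M.R s a| ≤ Rmax) :
    ∀ (l : List (S × O)) (hist : List O), |cumR M f hist l| ≤ (l.length : ℝ) * Rmax := by
  intro l
  induction l with
  | nil => intro hist; simp [cumR]
  | cons x rest ih =>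
    intro hist
    obtain ⟨s, o⟩ := x
    simp only [cumR, List.length_cons]
    calc |M.R s (f (hist ++ [o])) + cumR M f (hist ++ [o]) rest|
        ≤ |M.R s (f (hist ++ [o]))| + |cumR M f (hist ++ [o]) rest| := abs_add_le _ _
      _ ≤ Rmax + (rest.length : ℝ) * Rmax := add_le_add (hRbound _ _) (ih _)
      _ = ((rest.length + 1 : ℕ) : ℝ) * Rmax := by push_cast; ring

/-- Theorem 1 of the paper: if `M̄` is an `ε/(H²·N·R_max)`-approximation of `M`,
then for any policy `f`, the `H`-step values differ by at most `ε`. -/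
theorem stmt0 {S A O : Type} [Fintype S] [Fintype O]
    (M Mb : POMDP S A O) (b0 : S → ℝ) (H : ℕ) (Rmax ε : ℝ)
    (hH : 1 ≤ H) (hRmax : 0 < Rmax) (hε0 : 0 < ε) (hε1 : ε < 1)
    (hb0 : ∀ s, 0 ≤ b0 s) (hb0sum : ∑ s, b0 s = 1)
    (hTpos : ∀ s a s', 0 ≤ M.T s a s') (hTsum : ∀ s a, ∑ s', M.T s a s' = 1)
    (hTbpos : ∀ s a s', 0 ≤ Mb.T s a s') (hTbsum : ∀ s a, ∑ s', Mb.T s a s' = 1)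
    (hEpos : ∀ s o, 0 ≤ M.E s o) (hEsum : ∀ s, ∑ o, M.E s o = 1)
    (hRbound : ∀ s a, |M.R s a| ≤ Rmax)
    (hRe : Mb.R = M.R) (hEe : Mb.E = M.E)
    (hT : ∀ s a s', |M.T s a s' - Mb.T s a s'| ≤
      ε / ((H : ℝ) ^ 2 * (Fintype.card S : ℝ) * Rmax))
    (f : List O → A) :
    |value M b0 f H - value Mb b0 f H| ≤ ε := by
  have hS : 0 < Fintype.card S := by
    rcases Nat.eq_zero_or_pos (Fintype.card S) with h | h
    · have hE : IsEmpty S := Fintype.card_eq_zero_iff.mp h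
      have : (∑ s, b0 s) = 0 := by simp
      rw [hb0sum] at this; norm_num at this
    · exact h
  have hNpos : (0:ℝ) < (Fintype.card S : ℝ) := by exact_mod_cast hS
  have hHpos : (0:ℝ) < (H : ℝ) := by exact_mod_cast Nat.lt_of_lt_of_le Nat.zero_lt_one hH
  set α := ε / ((H : ℝ) ^ 2 * (Fintype.card S : ℝ) * Rmax) with hαdef
  have hD : (0:ℝ) < (H : ℝ) ^ 2 * (Fintype.card S : ℝ) * Rmax := by positivity
  have hα : 0 ≤ α := le_of_lt (div_pos hε0 hD)
  obtain ⟨K, rfl⟩ : ∃ K, H = K + 1 := ⟨H - 1, (Nat.sub_add_cancel hH).symm⟩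
  have hstep := stepProb_diff M Mb f α hTpos hTsum hTbpos hTbsum hEpos hEsum hEe hT
  have hval : value M b0 f (K+1) - value Mb b0 f (K+1)
      = ∑ ρ : Fin (K+1) → S × O,
          (trajProb M b0 f (List.ofFn ρ) - trajProb Mb b0 f (List.ofFn ρ))
            * cumR M f [] (List.ofFn ρ) := by
    unfold value
    rw [← Finset.sum_sub_distrib]
    apply Finset.sum_congr rfl
    intro ρ _
    rw [cumR_congr M Mb f hRe]
    ring
  have htraj : ∑ ρ : Fin (K+1) → S × O,
      |trajProb M b0 f (List.ofFn ρ) - trajProb Mb b0 f (List.ofFn ρ)|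
      ≤ (K : ℝ) * (Fintype.card S : ℝ) * α := by
    rw [sum_ofFn_succ' K (fun l => |trajProb M b0 f l - trajProb Mb b0 f l|)]
    have key : ∀ x : S × O,
        ∑ ρ : Fin K → S × O,
          |trajProb M b0 f (x :: List.ofFn ρ) - trajProb Mb b0 f (x :: List.ofFn ρ)|
        ≤ b0 x.1 * M.E x.1 x.2 * ((K : ℝ) * (Fintype.card S : ℝ) * α) := by
      rintro ⟨s, o⟩
      simp only [trajProb, hEe]
      have heq : ∀ ρ : Fin K → S × O,
          |b0 s * M.E s o * stepProb M f s [o] (List.ofFn ρ)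
            - b0 s * M.E s o * stepProb Mb f s [o] (List.ofFn ρ)|
          = b0 s * M.E s o * |stepProb M f s [o] (List.ofFn ρ)
            - stepProb Mb f s [o] (List.ofFn ρ)| := by
        intro ρ
        rw [← mul_sub, abs_mul, abs_of_nonneg (mul_nonneg (hb0 s) (hEpos s o))]
      rw [Finset.sum_congr rfl (fun ρ _ => heq ρ), ← Finset.mul_sum]
      exact mul_le_mul_of_nonneg_left (hstep K s [o])
        (mul_nonneg (hb0 s) (hEpos s o))
    calc ∑ x : S × O, ∑ ρ : Fin K → S × O,
          |trajProb M b0 f (x :: List.ofFn ρ) - trajProb Mb b0 f (x :: List.ofFn ρ)|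
        ≤ ∑ x : S × O, b0 x.1 * M.E x.1 x.2 * ((K : ℝ) * (Fintype.card S : ℝ) * α) :=
          Finset.sum_le_sum fun x _ => key x
      _ = (K : ℝ) * (Fintype.card S : ℝ) * α := by
          have hre : ∀ x : S × O, b0 x.1 * M.E x.1 x.2 * ((K : ℝ) * (Fintype.card S : ℝ) * α)
              = (b0 x.1 * ((K : ℝ) * (Fintype.card S : ℝ) * α)) * M.E x.1 x.2 :=
            fun x => by ring
          rw [Finset.sum_congr rfl (fun x _ => hre x), Fintype.sum_prod_type]
          simp only [← Finset.mul_sum, hEsum, mul_one, ← Finset.sum_mul, hb0sum, one_mul]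
  have hcum : ∀ ρ : Fin (K+1) → S × O,
      |cumR M f [] (List.ofFn ρ)| ≤ ((K:ℝ) + 1) * Rmax := by
    intro ρ
    have := cumR_bound M f Rmax hRbound (List.ofFn ρ) []
    simpa [List.length_ofFn] using this
  calc |value M b0 f (K+1) - value Mb b0 f (K+1)|
      = |∑ ρ : Fin (K+1) → S × O,
          (trajProb M b0 f (List.ofFn ρ) - trajProb Mb b0 f (List.ofFn ρ))
            * cumR M f [] (List.ofFn ρ)| := by rw [hval]
    _ ≤ ∑ ρ : Fin (K+1) → S × O,
          |(trajProb M b0 f (List.ofFn ρ) - trajProb Mb b0 f (List.ofFn ρ))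
            * cumR M f [] (List.ofFn ρ)| := Finset.abs_sum_le_sum_abs _ _
    _ ≤ ∑ ρ : Fin (K+1) → S × O,
          |trajProb M b0 f (List.ofFn ρ) - trajProb Mb b0 f (List.ofFn ρ)|
            * (((K:ℝ) + 1) * Rmax) := by
        apply Finset.sum_le_sum
        intro ρ _
        rw [abs_mul]
        exact mul_le_mul_of_nonneg_left (hcum ρ) (abs_nonneg _)
    _ = (∑ ρ : Fin (K+1) → S × O,
          |trajProb M b0 f (List.ofFn ρ) - trajProb Mb b0 f (List.ofFn ρ)|)
            * (((K:ℝ) + 1) * Rmax) := by rw [Finset.sum_mul]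
    _ ≤ ((K : ℝ) * (Fintype.card S : ℝ) * α) * (((K:ℝ) + 1) * Rmax) := by
        apply mul_le_mul_of_nonneg_right htraj
        positivity
    _ ≤ ε := by
        rw [hαdef]
        rw [div_eq_mul_inv]
        rw [← sub_nonneg]
        have hN := hNpos
        have hK1 : ((K:ℝ) + 1) > 0 := by positivity
        have hHc : ((K+1 : ℕ) : ℝ) = (K:ℝ) + 1 := by push_cast; ring
        rw [hHc] at hD ⊢
        have hinv : (((K:ℝ)+1)^2 * (Fintype.card S : ℝ) * Rmax)⁻¹ > 0 := by positivity
        have hident : ε - (K : ℝ) * (Fintype.card S : ℝ)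
              * (ε * (((K:ℝ)+1)^2 * (Fintype.card S : ℝ) * Rmax)⁻¹) * (((K:ℝ) + 1) * Rmax)
            = ε * (1 - ((K:ℝ) * ((K:ℝ)+1)) * (((K:ℝ)+1)^2)⁻¹
                * (((Fintype.card S : ℝ)) * ((Fintype.card S : ℝ))⁻¹)
                * (Rmax * Rmax⁻¹)) := by
          rw [mul_inv, mul_inv]
          ring
        rw [hident, mul_inv_cancel₀ (ne_of_gt hNpos), mul_inv_cancel₀ (ne_of_gt hRmax),
          mul_one, mul_one]
        have hfrac : ((K:ℝ) * ((K:ℝ)+1)) * (((K:ℝ)+1)^2)⁻¹ ≤ 1 := by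
          rw [← div_eq_mul_inv, div_le_one (by positivity)]
          nlinarith [hK1]
        nlinarith [hε0, hfrac]
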